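/- arXiv:2301.06037 — 2 statements merged into one kernel-verified Lean document; each statement's English description precedes it below -/
import Mathlib

section
/- (Theorem 1: MI equals negative CE.) Let n ≥ 1 and for each i = 1,…,n let pᵢ : ℝ → [0,∞) be a probability density with CDF Fᵢ assumed continuous and strictly increasing, let c : [0,1]ⁿ → [0,∞) be measurable, and suppose p(x) := c(F₁(x₁),…,Fₙ(xₙ)) ∏_{i=1}^n pᵢ(xᵢ) is a probability density on ℝⁿ whose i-th one-dimensional marginal is pᵢ. If u ↦ c(u) log c(u) is integrable on [0,1]ⁿ, then the mutual information I(X) := ∫_{ℝⁿ} p(x) log( p(x) / ∏ᵢ pᵢ(xᵢ) ) dx is well defined and I(X) = −H_c(X), where H_c(X) := −∫_{[0,1]ⁿ} c(u) log c(u) du is the copula entropy. -/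
open MeasureTheory

private theorem lintegral_pi_prod_aux : ∀ (n : ℕ) (f : Fin n → ℝ → ENNReal),
    (∀ i, Measurable (f i)) →
    ∫⁻ x : Fin n → ℝ, ∏ i, f i (x i) ∂(Measure.pi fun _ => (volume : Measure ℝ)) =
      ∏ i, ∫⁻ t, f i t := by
  intro n
  induction n with
  | zero =>
      intro f _
      rw [Measure.pi_of_empty]
      simp
  | succ n ih =>
      intro f hf
      have h := (measurePreserving_piFinSuccAbove (fun _ : Fin (n + 1) => (volume : Measure ℝ)) 0).symm
      have hmeas : Measurable fun x : Fin (n + 1) → ℝ => ∏ i, f i (x i) :=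
        Finset.measurable_prod _ fun i _ => (hf i).comp (measurable_pi_apply i)
      rw [← h.lintegral_comp hmeas]
      simp_rw [MeasurableEquiv.piFinSuccAbove_symm_apply, Fin.insertNthEquiv, Equiv.coe_fn_mk,
        Fin.insertNth_zero, Fin.prod_univ_succ, Fin.cons_zero, Fin.cons_succ, cast_eq]
      have hg2 : Measurable fun y : Fin n → ℝ => ∏ i, f i.succ (y i) :=
        Finset.measurable_prod _ fun i _ => (hf i.succ).comp (measurable_pi_apply i)
      rw [lintegral_prod_mul (hf 0).aemeasurable hg2.aemeasurable, ih _ fun i => hf i.succ]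

private theorem pi_withDensity_prod (n : ℕ) (p : Fin n → ℝ → ℝ) (hm : ∀ i, Measurable (p i))
    (h0 : ∀ i x, 0 ≤ p i x) :
    Measure.pi (fun i => (volume : Measure ℝ).withDensity fun t => ENNReal.ofReal (p i t)) =
      (volume : Measure (Fin n → ℝ)).withDensity fun x => ENNReal.ofReal (∏ i, p i (x i)) := by
  refine (Measure.pi_eq (μ' := (volume : Measure (Fin n → ℝ)).withDensity
    fun x => ENNReal.ofReal (∏ i, p i (x i))) (μ := fun i => (volume : Measure ℝ).withDensity
    fun t => ENNReal.ofReal (p i t)) fun s hs => ?_)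
  rw [withDensity_apply _ (MeasurableSet.univ_pi hs),
    ← lintegral_indicator (MeasurableSet.univ_pi hs)]
  have hind : (Set.univ.pi fun i => s i).indicator
      (fun x : Fin n → ℝ => ENNReal.ofReal (∏ i, p i (x i))) =
      fun x => ∏ i, (s i).indicator (fun t => ENNReal.ofReal (p i t)) (x i) := by
    funext x
    by_cases hx : x ∈ Set.univ.pi fun i => s i
    · rw [Set.indicator_of_mem hx, ENNReal.ofReal_prod_of_nonneg fun i _ => h0 i (x i)]
      refine Finset.prod_congr rfl fun i _ => ?_
      rw [Set.indicator_of_mem ((Set.mem_univ_pi).1 hx i)]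
    · rw [Set.indicator_of_notMem hx]
      rw [Set.mem_univ_pi] at hx
      push_neg at hx
      obtain ⟨i, hi⟩ := hx
      exact (Finset.prod_eq_zero (Finset.mem_univ i)
        (by rw [Set.indicator_of_notMem hi])).symm
  rw [hind, volume_pi,
    lintegral_pi_prod_aux n _ (fun i => ((hm i).ennreal_ofReal).indicator (hs i))]
  exact Finset.prod_congr rfl fun i _ => by
    rw [lintegral_indicator (hs i), withDensity_apply _ (hs i)]

private theorem pi_restrict_Ioo (n : ℕ) :
    (Measure.pi fun _ : Fin n => (volume : Measure ℝ).restrict (Set.Ioo 0 1)) =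
      (volume : Measure (Fin n → ℝ)).restrict (Set.univ.pi fun _ => Set.Ioo (0 : ℝ) 1) := by
  refine (Measure.pi_eq (μ' := (volume : Measure (Fin n → ℝ)).restrict
    (Set.univ.pi fun _ => Set.Ioo (0 : ℝ) 1)) (μ := fun _ : Fin n =>
    (volume : Measure ℝ).restrict (Set.Ioo 0 1)) fun s hs => ?_)
  rw [Measure.restrict_apply (MeasurableSet.univ_pi hs), ← Set.pi_inter_distrib, volume_pi_pi]
  exact Finset.prod_congr rfl fun i _ => by
    rw [Measure.restrict_apply (hs i)]

private theorem oneDimPIT (p : ℝ → ℝ) (hm : Measurable p) (h0 : ∀ x, 0 ≤ p x)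
    (h1 : ∫ x, p x = 1) (F : ℝ → ℝ) (hF : ∀ x, F x = ∫ t in Set.Iic x, p t)
    (hc : Continuous F) (hsm : StrictMono F) :
    MeasurePreserving F (volume.withDensity fun t => ENNReal.ofReal (p t))
      (volume.restrict (Set.Ioo (0 : ℝ) 1)) := by
  have hint : Integrable p := by
    by_contra h
    rw [integral_undef h] at h1
    norm_num at h1
  set μ := volume.withDensity fun t => ENNReal.ofReal (p t) with hμ
  have hIic : ∀ a, μ (Set.Iic a) = ENNReal.ofReal (F a) := by
    intro a
    rw [hμ, withDensity_apply _ measurableSet_Iic, hF,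
      ← ofReal_integral_eq_lintegral_ofReal hint.integrableOn
        (Filter.Eventually.of_forall fun x => h0 x)]
  have hμuniv : μ Set.univ = 1 := by
    rw [hμ, withDensity_apply _ MeasurableSet.univ, Measure.restrict_univ,
      ← ofReal_integral_eq_lintegral_ofReal hint (Filter.Eventually.of_forall h0), h1,
      ENNReal.ofReal_one]
  have hF0 : ∀ a, 0 ≤ F a := fun a => by
    rw [hF]; exact setIntegral_nonneg measurableSet_Iic fun x _ => h0 x
  have hFle : ∀ a, F a ≤ 1 := fun a => by
    rw [hF, ← h1]
    exact setIntegral_le_integral hint (Filter.Eventually.of_forall h0)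
  have hFpos : ∀ a, 0 < F a := fun a => lt_of_le_of_lt (hF0 (a - 1)) (hsm (by linarith))
  have hFlt1 : ∀ a, F a < 1 := fun a => lt_of_lt_of_le (hsm (lt_add_one a)) (hFle (a + 1))
  haveI : IsProbabilityMeasure μ := ⟨hμuniv⟩
  have hFtoReal : ∀ a, F a = (μ (Set.Iic a)).toReal := fun a => by
    rw [hIic, ENNReal.toReal_ofReal (hF0 a)]
  have htop : Filter.Tendsto F Filter.atTop (nhds 1) := by
    have h := tendsto_measure_Iic_atTop μ
    rw [hμuniv] at h
    have h2 := (ENNReal.tendsto_toReal (by norm_num : (1 : ENNReal) ≠ ⊤)).comp h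
    have h3 : (ENNReal.toReal ∘ fun x => μ (Set.Iic x)) = F :=
      funext fun a => (hFtoReal a).symm
    rw [h3] at h2
    simpa using h2
  have hbot : Filter.Tendsto (fun k : ℕ => F (-(k : ℝ))) Filter.atTop (nhds 0) := by
    have h := tendsto_measure_iInter_atTop (μ := μ) (s := fun k : ℕ => Set.Iic (-(k : ℝ)))
      (fun k => measurableSet_Iic.nullMeasurableSet)
      (fun i j hij => Set.Iic_subset_Iic.2 (by exact_mod_cast neg_le_neg (Nat.cast_le.2 hij)))
      ⟨0, measure_ne_top μ _⟩
    have hiInter : ⋂ k : ℕ, Set.Iic (-(k : ℝ)) = ∅ := by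
      ext x
      simp only [Set.mem_iInter, Set.mem_Iic, Set.mem_empty_iff_false, iff_false, not_forall,
        not_le]
      obtain ⟨k, hk⟩ := exists_nat_gt (-x)
      exact ⟨k, by linarith⟩
    rw [hiInter, measure_empty] at h
    have h2 := (ENNReal.tendsto_toReal (by norm_num : (0 : ENNReal) ≠ ⊤)).comp h
    have h3 : (ENNReal.toReal ∘ ⇑μ ∘ fun k : ℕ => Set.Iic (-(k : ℝ))) =
        fun k : ℕ => F (-(k : ℝ)) := funext fun k => (hFtoReal _).symm
    rw [h3] at h2
    simpa using h2
  have hsurj : ∀ b : ℝ, 0 < b → b < 1 → ∃ x, F x = b := by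
    intro b hb0 hb1
    obtain ⟨a0, ha0⟩ := (htop.eventually (eventually_gt_nhds hb1)).exists
    obtain ⟨k, hk⟩ := (hbot.eventually (eventually_lt_nhds hb0)).exists
    have hlt : -(k : ℝ) ≤ a0 := by
      by_contra hcon
      push_neg at hcon
      have := hsm hcon
      linarith
    obtain ⟨x, _, hx⟩ := intermediate_value_Icc hlt hc.continuousOn ⟨hk.le, ha0.le⟩
    exact ⟨x, hx⟩
  refine ⟨hc.measurable, ?_⟩
  haveI : IsFiniteMeasure (μ.map F) := ⟨by
    rw [Measure.map_apply hc.measurable MeasurableSet.univ, Set.preimage_univ, hμuniv]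
    exact ENNReal.one_lt_top⟩
  refine Measure.ext_of_Iic (μ.map F) _ fun b => ?_
  rw [Measure.map_apply hc.measurable measurableSet_Iic,
    Measure.restrict_apply measurableSet_Iic]
  rcases le_or_gt b 0 with hb | hb
  · have h1' : F ⁻¹' Set.Iic b = ∅ := by
      ext z
      simp only [Set.mem_preimage, Set.mem_Iic, Set.mem_empty_iff_false, iff_false, not_le]
      exact lt_of_le_of_lt hb (hFpos z)
    have h2' : Set.Iic b ∩ Set.Ioo (0 : ℝ) 1 = ∅ := by
      ext z
      simp only [Set.mem_inter_iff, Set.mem_Iic, Set.mem_Ioo, Set.mem_empty_iff_false, iff_false,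
        not_and]
      intro hz1 hz2
      linarith
    rw [h1', h2']
    simp
  · rcases lt_or_ge b 1 with hb1 | hb1
    · obtain ⟨x, hx⟩ := hsurj b hb hb1
      have h1' : F ⁻¹' Set.Iic b = Set.Iic x := by
        ext z
        simp only [Set.mem_preimage, Set.mem_Iic, ← hx]
        exact hsm.le_iff_le
      have h2' : Set.Iic b ∩ Set.Ioo (0 : ℝ) 1 = Set.Ioc 0 b := by
        ext z
        simp only [Set.mem_inter_iff, Set.mem_Iic, Set.mem_Ioo, Set.mem_Ioc]
        constructor
        · rintro ⟨hz1, hz2, _⟩; exact ⟨hz2, hz1⟩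
        · rintro ⟨hz1, hz2⟩; exact ⟨hz2, hz1, by linarith⟩
      rw [h1', h2', hIic, hx, Real.volume_Ioc, sub_zero]
    · have h1' : F ⁻¹' Set.Iic b = Set.univ := by
        ext z
        simp only [Set.mem_preimage, Set.mem_Iic, Set.mem_univ, iff_true]
        exact le_of_lt (lt_of_lt_of_le (hFlt1 z) hb1)
      have h2' : Set.Iic b ∩ Set.Ioo (0 : ℝ) 1 = Set.Ioo 0 1 := by
        ext z
        simp only [Set.mem_inter_iff, Set.mem_Iic, Set.mem_Ioo, and_iff_right_iff_imp]
        rintro ⟨_, hz2⟩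
        linarith
      rw [h1', h2', hμuniv, Real.volume_Ioo, sub_zero, ENNReal.ofReal_one]

/-- **Theorem 1 (Ma–Sun): mutual information equals negative copula entropy.**
If a joint density `P` on ℝⁿ factorizes as `P x = c (F₁ x₁, …, Fₙ xₙ) · ∏ᵢ pᵢ xᵢ`, where
the `pᵢ` are the one-dimensional marginal densities of `P` with continuous, strictly
increasing CDFs `Fᵢ`, and `c log c` is integrable on `[0,1]ⁿ`, then the mutual information
`I := ∫ P log (P / ∏ᵢ pᵢ)` is well defined (the integrand is integrable) and equals the
negative of the copula entropy `H_c := −∫_{[0,1]ⁿ} c log c`. -/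
theorem mutualInformation_eq_neg_copulaEntropy
    (n : ℕ) (hn : 1 ≤ n)
    (p : Fin n → ℝ → ℝ) (hp_meas : ∀ i, Measurable (p i))
    (hp_nonneg : ∀ i x, 0 ≤ p i x) (hp_int : ∀ i, ∫ x, p i x = 1)
    (F : Fin n → ℝ → ℝ) (hF : ∀ i x, F i x = ∫ t in Set.Iic x, p i t)
    (hF_cont : ∀ i, Continuous (F i)) (hF_mono : ∀ i, StrictMono (F i))
    (c : (Fin n → ℝ) → ℝ) (hc_meas : Measurable c) (hc_nonneg : ∀ u, 0 ≤ c u)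
    (P : (Fin n → ℝ) → ℝ)
    (hP : ∀ x, P x = c (fun i => F i (x i)) * ∏ i, p i (x i))
    (hP_int : ∫ x, P x = 1)
    (hmarg : ∀ i, Measure.map (fun x => x i)
        (volume.withDensity fun x => ENNReal.ofReal (P x)) =
      volume.withDensity fun t => ENNReal.ofReal (p i t))
    (hclogc : IntegrableOn (fun u => c u * Real.log (c u))
      (Set.univ.pi fun _ : Fin n => Set.Icc (0 : ℝ) 1) volume) :
    Integrable (fun x => P x * Real.log (P x / ∏ i, p i (x i))) ∧
    ∫ x, P x * Real.log (P x / ∏ i, p i (x i)) =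
      -(-∫ u in Set.univ.pi fun _ : Fin n => Set.Icc (0 : ℝ) 1,
          c u * Real.log (c u)) := by
  have hg_meas : Measurable fun u => c u * Real.log (c u) :=
    hc_meas.mul (Real.measurable_log.comp hc_meas)
  set g : (Fin n → ℝ) → ℝ := fun u => c u * Real.log (c u) with hg_def
  set T : (Fin n → ℝ) → (Fin n → ℝ) := fun x i => F i (x i) with hT_def
  have hT : MeasurePreserving T
      (Measure.pi fun i => volume.withDensity fun t => ENNReal.ofReal (p i t))
      (Measure.pi fun _ : Fin n => volume.restrict (Set.Ioo (0 : ℝ) 1)) :=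
    measurePreserving_pi _ _ fun i =>
      oneDimPIT (p i) (hp_meas i) (hp_nonneg i) (hp_int i) (F i) (hF i) (hF_cont i) (hF_mono i)
  have hT' : MeasurePreserving T
      ((volume : Measure (Fin n → ℝ)).withDensity fun x => ENNReal.ofReal (∏ i, p i (x i)))
      (volume.restrict (Set.univ.pi fun _ => Set.Ioo (0 : ℝ) 1)) := by
    rwa [pi_restrict_Ioo n, pi_withDensity_prod n p hp_meas hp_nonneg] at hT
  have hae : (Set.univ.pi fun _ : Fin n => Set.Ioo (0 : ℝ) 1)
      =ᵐ[(volume : Measure (Fin n → ℝ))] (Set.univ.pi fun _ => Set.Icc (0 : ℝ) 1) := by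
    rw [volume_pi]
    exact Measure.pi_Ioo_ae_eq_pi_Icc
  have hgIoo : IntegrableOn g (Set.univ.pi fun _ : Fin n => Set.Ioo (0 : ℝ) 1) volume :=
    hclogc.congr_set_ae hae
  have hcomp : Integrable (g ∘ T)
      ((volume : Measure (Fin n → ℝ)).withDensity fun x => ENNReal.ofReal (∏ i, p i (x i))) :=
    (hT'.integrable_comp hg_meas.aestronglyMeasurable).2 hgIoo
  have hDmeas : Measurable fun x : Fin n → ℝ => ∏ i, p i (x i) :=
    Finset.measurable_prod _ fun i _ => (hp_meas i).comp (measurable_pi_apply i)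
  have hqnn : ∀ x : Fin n → ℝ, 0 ≤ ∏ i, p i (x i) := fun x =>
    Finset.prod_nonneg fun i _ => hp_nonneg i (x i)
  have hwd : Integrable (fun x => g (T x) * ∏ i, p i (x i)) := by
    have := (integrable_withDensity_iff hDmeas.ennreal_ofReal
      (Filter.Eventually.of_forall fun x => ENNReal.ofReal_lt_top)).1 hcomp
    simpa [Function.comp, ENNReal.toReal_ofReal (hqnn _)] using this
  have key : (fun x => P x * Real.log (P x / ∏ i, p i (x i))) =
      fun x => g (T x) * ∏ i, p i (x i) := by
    funext x
    rcases eq_or_lt_of_le (hqnn x) with h | h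
    · rw [hP x, ← h, mul_zero, zero_mul, mul_zero]
    · have hPx : P x = c (T x) * ∏ i, p i (x i) := hP x
      have hdiv : P x / ∏ i, p i (x i) = c (T x) := by
        rw [hPx, mul_div_assoc, div_self (ne_of_gt h), mul_one]
      simp only [hg_def]
      rw [hdiv, hPx]
      ring
  have hInt : Integrable (fun x => P x * Real.log (P x / ∏ i, p i (x i))) := by
    rw [key]; exact hwd
  refine ⟨hInt, ?_⟩
  rw [neg_neg, key]
  have e1 : ∫ x, g (T x) * ∏ i, p i (x i) =
      ∫ x, g (T x) ∂((volume : Measure (Fin n → ℝ)).withDensity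
        fun x => ENNReal.ofReal (∏ i, p i (x i))) := by
    have hrfl : (fun x : Fin n → ℝ => ENNReal.ofReal (∏ i, p i (x i))) =
        fun x => ((Real.toNNReal (∏ i, p i (x i)) : NNReal) : ENNReal) := rfl
    rw [hrfl, integral_withDensity_eq_integral_smul hDmeas.real_toNNReal]
    congr 1
    funext x
    rw [NNReal.smul_def, Real.coe_toNNReal _ (hqnn x), mul_comm, smul_eq_mul]
  have e2 : ∫ x, g (T x) ∂((volume : Measure (Fin n → ℝ)).withDensity
        fun x => ENNReal.ofReal (∏ i, p i (x i))) =
      ∫ u in Set.univ.pi fun _ : Fin n => Set.Ioo (0 : ℝ) 1, g u := by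
    rw [← hT'.map_eq]
    exact (integral_map hT'.measurable.aemeasurable hg_meas.aestronglyMeasurable).symm
  rw [e1, e2, setIntegral_congr_set hae]
end

section
/- (Corollary 1: entropy decomposition.) Let n ≥ 1 and for each i = 1,…,n let pᵢ : ℝ → [0,∞) be a probability density with CDF Fᵢ assumed continuous and strictly increasing, let c : [0,1]ⁿ → [0,∞) be measurable, and suppose p(x) := c(F₁(x₁),…,Fₙ(xₙ)) ∏_{i=1}^n pᵢ(xᵢ) is a probability density on ℝⁿ whose i-th one-dimensional marginal is pᵢ. If p log p is integrable on ℝⁿ, each pᵢ log pᵢ is integrable on ℝ, and c log c is integrable on [0,1]ⁿ, then the joint differential entropy equals the sum of the marginal differential entropies plus the copula entropy: −∫_{ℝⁿ} p log p dx = Σ_{i=1}^n ( −∫_ℝ pᵢ log pᵢ dxᵢ ) + ( −∫_{[0,1]ⁿ} c log c du ). -/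
open MeasureTheory ProbabilityTheory Real Set
open scoped ENNReal

/-!
Write `G x = (F₁ x₁, …, Fₙ xₙ)`, so that `P = (c ∘ G) · ∏ᵢ pᵢ(xᵢ)`. Pointwise,
`P log P = P log (c ∘ G) + ∑ᵢ P log pᵢ(xᵢ)`, and each summand is integrated by pushing the law
`P dx` forward. Along the `i`-th coordinate it becomes `pᵢ dt` (the marginal hypothesis). Along `G`
it becomes `c du` on the open unit cube: by the probability integral transform each `Fᵢ` pushes
`pᵢ dt` to the uniform law on `(0, 1)`, so `G` pushes the product law `∏ᵢ pᵢ(xᵢ) dx` to Lebesgue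
measure on the cube, and the weight `c ∘ G` is carried along to `c`.
-/

-- `Real.log` is multiplicative on all nonzero reals, and both sides vanish when `x = 0`.
theorem Real.mul_log_eq_of_eq_mul_prod {ι : Type*} {s : Finset ι} {x a : ℝ} {b : ι → ℝ}
    (hx : x = a * ∏ i ∈ s, b i) : x * log x = x * log a + ∑ i ∈ s, x * log (b i) := by
  rcases eq_or_ne x 0 with rfl | hx0
  · simp
  have ha : a ≠ 0 := fun h ↦ hx0 (by rw [hx, h, zero_mul])
  have hb : ∏ i ∈ s, b i ≠ 0 := fun h ↦ hx0 (by rw [hx, h, mul_zero])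
  rw [← Finset.mul_sum, ← mul_add, ← log_prod fun i hi ↦ Finset.prod_ne_zero_iff.1 hb i hi,
    ← log_mul ha hb, ← hx]

namespace MeasureTheory

section Pi

variable {ι E : Type*} [Fintype ι] [MeasurableSpace E]

theorem lintegral_fin_nat_prod_eq_prod {n : ℕ} {μ : Fin n → Measure E} [∀ i, SigmaFinite (μ i)]
    {f : Fin n → E → ℝ≥0∞} (hf : ∀ i, Measurable (f i)) :
    ∫⁻ x, ∏ i, f i (x i) ∂Measure.pi μ = ∏ i, ∫⁻ x, f i x ∂μ i := by
  induction n with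
  | zero => simp
  | succ n ih =>
    calc
      _ = ∫⁻ x : E × (Fin n → E), f 0 x.1 * ∏ i : Fin n, f i.succ (x.2 i)
          ∂((μ 0).prod (Measure.pi fun i ↦ μ i.succ)) := by
        rw [← ((measurePreserving_piFinSuccAbove μ 0).symm).lintegral_comp_emb
          (MeasurableEquiv.measurableEmbedding _)]
        simp_rw [MeasurableEquiv.piFinSuccAbove_symm_apply, Fin.insertNthEquiv,
          Fin.prod_univ_succ, Fin.insertNth_zero, Equiv.coe_fn_mk, Fin.cons_succ,
          Fin.zero_succAbove, cast_eq, Fin.cons_zero]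
      _ = (∫⁻ x, f 0 x ∂μ 0) * ∏ i : Fin n, ∫⁻ x, f i.succ x ∂μ i.succ := by
        rw [← ih fun i ↦ hf i.succ]
        exact lintegral_prod_mul (hf 0).aemeasurable (Finset.measurable_prod _
          fun (i : Fin n) _ ↦ (hf i.succ).comp (measurable_pi_apply i)).aemeasurable
      _ = ∏ i, ∫⁻ x, f i x ∂μ i := (Fin.prod_univ_succ (fun i ↦ ∫⁻ x, f i x ∂μ i)).symm

theorem lintegral_fintype_prod_eq_prod {μ : ι → Measure E} [∀ i, SigmaFinite (μ i)]
    {f : ι → E → ℝ≥0∞} (hf : ∀ i, Measurable (f i)) :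
    ∫⁻ x, ∏ i, f i (x i) ∂Measure.pi μ = ∏ i, ∫⁻ x, f i x ∂μ i := by
  let e := (Fintype.equivFin ι).symm
  rw [← (measurePreserving_piCongrLeft _ e).lintegral_comp_emb
    (MeasurableEquiv.measurableEmbedding _)]
  simp_rw [← e.prod_comp, MeasurableEquiv.coe_piCongrLeft, Equiv.piCongrLeft_apply_apply]
  exact lintegral_fin_nat_prod_eq_prod fun i ↦ hf (e i)

theorem Measure.pi_withDensity {μ : ι → Measure E} [∀ i, SigmaFinite (μ i)]
    {f : ι → E → ℝ≥0∞} (hf : ∀ i, Measurable (f i))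
    [∀ i, SigmaFinite ((μ i).withDensity (f i))] :
    Measure.pi (fun i ↦ (μ i).withDensity (f i)) =
      (Measure.pi μ).withDensity fun x ↦ ∏ i, f i (x i) := by
  refine Measure.pi_eq fun s hs ↦ ?_
  rw [withDensity_apply _ (.univ_pi hs), ← lintegral_indicator (.univ_pi hs)]
  simp_rw [withDensity_apply _ (hs _), ← lintegral_indicator (hs _)]
  rw [← lintegral_fintype_prod_eq_prod fun i ↦ (hf i).indicator (hs i)]
  classical
  congr 1 with x
  simp only [Set.indicator_apply, Set.mem_univ_pi, Fintype.prod_ite_zero]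

theorem Measure.pi_withDensity_ofReal_mul_prod {ν : ι → Measure E} [∀ i, SigmaFinite (ν i)]
    {p : ι → E → ℝ} (hp : ∀ i, Measurable (p i)) (hp0 : ∀ i x, 0 ≤ p i x)
    {g : (ι → E) → ℝ} (hg : Measurable g) :
    (Measure.pi ν).withDensity (fun x ↦ ENNReal.ofReal (g x * ∏ i, p i (x i))) =
      (Measure.pi fun i ↦ (ν i).withDensity fun t ↦ ENNReal.ofReal (p i t)).withDensity
        fun x ↦ ENNReal.ofReal (g x) := by
  rw [Measure.pi_withDensity fun i ↦ (hp i).ennreal_ofReal,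
    ← withDensity_mul _ (by fun_prop) hg.ennreal_ofReal]
  congr 1 with x
  rw [Pi.mul_apply, ENNReal.ofReal_mul' (Finset.prod_nonneg fun i _ ↦ hp0 i _),
    ENNReal.ofReal_prod_of_nonneg fun i _ ↦ hp0 i _, mul_comm]

end Pi

section WithDensity

variable {α β : Type*} [MeasurableSpace α] [MeasurableSpace β] {μ : Measure α} {ν : Measure β}

theorem integrable_withDensity_ofReal_iff {d : α → ℝ} (hd : Measurable d) (hd0 : ∀ x, 0 ≤ d x)
    {g : α → ℝ} :
    Integrable g (μ.withDensity fun x ↦ ENNReal.ofReal (d x)) ↔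
      Integrable (fun x ↦ d x * g x) μ := by
  rw [integrable_withDensity_iff_integrable_smul' hd.ennreal_ofReal
    (ae_of_all _ fun _ ↦ ENNReal.ofReal_lt_top)]
  simp_rw [ENNReal.toReal_ofReal (hd0 _), smul_eq_mul]

theorem integral_withDensity_ofReal {d : α → ℝ} (hd : Measurable d) (hd0 : ∀ x, 0 ≤ d x)
    (g : α → ℝ) :
    ∫ x, g x ∂μ.withDensity (fun x ↦ ENNReal.ofReal (d x)) = ∫ x, d x * g x ∂μ := by
  rw [integral_withDensity_eq_integral_toReal_smul hd.ennreal_ofReal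
    (ae_of_all _ fun _ ↦ ENNReal.ofReal_lt_top)]
  simp_rw [ENNReal.toReal_ofReal (hd0 _), smul_eq_mul]

theorem Measure.map_withDensity_comp {f : α → β} (hf : Measurable f) {g : β → ℝ≥0∞}
    (hg : Measurable g) : (μ.withDensity fun x ↦ g (f x)).map f = (μ.map f).withDensity g := by
  ext s hs
  rw [Measure.map_apply hf hs, withDensity_apply _ (hf hs), withDensity_apply _ hs,
    setLIntegral_map hs hg hf]

theorem integrable_mul_comp_iff_of_map_withDensity_eq {f : α → β} (hf : Measurable f)
    {d : α → ℝ} (hd : Measurable d) (hd0 : ∀ x, 0 ≤ d x)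
    {e : β → ℝ} (he : Measurable e) (he0 : ∀ y, 0 ≤ e y)
    (hmap : (μ.withDensity fun x ↦ ENNReal.ofReal (d x)).map f =
      ν.withDensity fun y ↦ ENNReal.ofReal (e y))
    {g : β → ℝ} (hg : Measurable g) :
    Integrable (fun x ↦ d x * g (f x)) μ ↔ Integrable (fun y ↦ e y * g y) ν := by
  rw [← integrable_withDensity_ofReal_iff hd hd0, ← integrable_withDensity_ofReal_iff he he0,
    ← hmap, integrable_map_measure hg.aestronglyMeasurable hf.aemeasurable]
  rfl

theorem integral_mul_comp_of_map_withDensity_eq {f : α → β} (hf : Measurable f)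
    {d : α → ℝ} (hd : Measurable d) (hd0 : ∀ x, 0 ≤ d x)
    {e : β → ℝ} (he : Measurable e) (he0 : ∀ y, 0 ≤ e y)
    (hmap : (μ.withDensity fun x ↦ ENNReal.ofReal (d x)).map f =
      ν.withDensity fun y ↦ ENNReal.ofReal (e y))
    {g : β → ℝ} (hg : Measurable g) :
    ∫ x, d x * g (f x) ∂μ = ∫ y, e y * g y ∂ν := by
  rw [← integral_withDensity_ofReal hd hd0, ← integral_withDensity_ofReal he he0, ← hmap,
    integral_map hf.aemeasurable hg.aestronglyMeasurable]

theorem integral_mul_log_eq_add_sum_of_map_withDensity {ι β₀ : Type*} [Fintype ι]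
    {β : ι → Type*} [MeasurableSpace β₀] [∀ i, MeasurableSpace (β i)]
    {ν₀ : Measure β₀} {ν : ∀ i, Measure (β i)} {f₀ : α → β₀} {f : ∀ i, α → β i}
    (hf₀ : Measurable f₀) (hf : ∀ i, Measurable (f i))
    {e₀ : β₀ → ℝ} (he₀ : Measurable e₀) (he₀0 : ∀ y, 0 ≤ e₀ y)
    {e : ∀ i, β i → ℝ} (he : ∀ i, Measurable (e i)) (he0 : ∀ i y, 0 ≤ e i y) {d : α → ℝ}
    (hmap₀ : (μ.withDensity fun x ↦ ENNReal.ofReal (d x)).map f₀ =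
      ν₀.withDensity fun y ↦ ENNReal.ofReal (e₀ y))
    (hmap : ∀ i, (μ.withDensity fun x ↦ ENNReal.ofReal (d x)).map (f i) =
      (ν i).withDensity fun y ↦ ENNReal.ofReal (e i y))
    (hde : ∀ x, d x = e₀ (f₀ x) * ∏ i, e i (f i x))
    (hint₀ : Integrable (fun y ↦ e₀ y * log (e₀ y)) ν₀)
    (hint : ∀ i, Integrable (fun y ↦ e i y * log (e i y)) (ν i)) :
    ∫ x, d x * log (d x) ∂μ =
      ∫ y, e₀ y * log (e₀ y) ∂ν₀ + ∑ i, ∫ y, e i y * log (e i y) ∂ν i := by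
  have hd : Measurable d := by
    rw [funext hde]
    exact (he₀.comp hf₀).mul (Finset.measurable_prod _ fun i _ ↦ (he i).comp (hf i))
  have hd0 : ∀ x, 0 ≤ d x := fun x ↦
    hde x ▸ mul_nonneg (he₀0 _) (Finset.prod_nonneg fun i _ ↦ he0 i _)
  have hint_comp₀ := (integrable_mul_comp_iff_of_map_withDensity_eq hf₀ hd hd0 he₀ he₀0 hmap₀
    he₀.log).2 hint₀
  have hint_comp := fun i ↦ (integrable_mul_comp_iff_of_map_withDensity_eq (hf i) hd hd0 (he i)
    (he0 i) (hmap i) (he i).log).2 (hint i)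
  rw [integral_congr_ae (ae_of_all _ fun x ↦ mul_log_eq_of_eq_mul_prod (hde x)),
    integral_add hint_comp₀ (integrable_finsetSum _ fun i _ ↦ hint_comp i),
    integral_finsetSum _ fun i _ ↦ hint_comp i, integral_mul_comp_of_map_withDensity_eq hf₀ hd hd0
      he₀ he₀0 hmap₀ he₀.log]
  exact congrArg _ <| Finset.sum_congr rfl fun i _ ↦ integral_mul_comp_of_map_withDensity_eq
    (hf i) hd hd0 (he i) (he0 i) (hmap i) (he i).log

theorem isProbabilityMeasure_withDensity_ofReal {p : α → ℝ} (hp0 : ∀ x, 0 ≤ p x)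
    (hp : ∫ x, p x ∂μ = 1) :
    IsProbabilityMeasure (μ.withDensity fun x ↦ ENNReal.ofReal (p x)) := by
  constructor
  rw [withDensity_apply _ .univ, Measure.restrict_univ, ← ofReal_integral_eq_lintegral_ofReal
    (.of_integral_ne_zero (by simp [hp])) (ae_of_all _ hp0), hp, ENNReal.ofReal_one]

end WithDensity

end MeasureTheory

namespace ProbabilityTheory

theorem cdf_withDensity_ofReal {p : ℝ → ℝ} (hp0 : ∀ x, 0 ≤ p x) (hp : ∫ x, p x = 1) (x : ℝ) :
    cdf (volume.withDensity fun t ↦ ENNReal.ofReal (p t)) x = ∫ t in Iic x, p t := by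
  have := isProbabilityMeasure_withDensity_ofReal hp0 hp
  have hp_int : Integrable p := .of_integral_ne_zero (by simp [hp])
  rw [cdf_eq_real, measureReal_def, withDensity_apply _ measurableSet_Iic,
    ← ofReal_integral_eq_lintegral_ofReal hp_int.integrableOn (ae_of_all _ hp0),
    ENNReal.toReal_ofReal (setIntegral_nonneg measurableSet_Iic fun t _ ↦ hp0 t)]

variable {μ : Measure ℝ}

theorem cdf_mem_Ioo_of_strictMono (hmono : StrictMono (cdf μ)) (x : ℝ) : cdf μ x ∈ Ioo 0 1 :=
  ⟨(cdf_nonneg μ (x - 1)).trans_lt (hmono (sub_one_lt x)),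
    (hmono (lt_add_one x)).trans_le (cdf_le_one μ _)⟩

theorem range_cdf_eq_Ioo (hcont : Continuous (cdf μ)) (hmono : StrictMono (cdf μ)) :
    range (cdf μ) = Ioo 0 1 := by
  refine (range_subset_iff.2 (cdf_mem_Ioo_of_strictMono hmono)).antisymm fun y hy ↦ ?_
  obtain ⟨a, ha⟩ := ((tendsto_cdf_atBot μ).eventually (gt_mem_nhds hy.1)).exists
  obtain ⟨b, hb⟩ := ((tendsto_cdf_atTop μ).eventually (lt_mem_nhds hy.2)).exists
  exact mem_range_of_exists_le_of_exists_ge hcont ⟨a, ha.le⟩ ⟨b, hb.le⟩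

theorem map_cdf_eq_volume_restrict_Ioo [IsProbabilityMeasure μ] (hcont : Continuous (cdf μ))
    (hmono : StrictMono (cdf μ)) :
    μ.map (cdf μ) = volume.restrict (Ioo 0 1) := by
  refine Measure.ext_of_Iic _ _ fun y ↦ ?_
  rw [Measure.map_apply hcont.measurable measurableSet_Iic,
    Measure.restrict_apply measurableSet_Iic]
  rcases le_or_gt y 0 with hy0 | hy0
  · have hpre : cdf μ ⁻¹' Iic y = ∅ := eq_empty_of_forall_notMem fun x hx ↦
      (hy0.trans_lt (cdf_mem_Ioo_of_strictMono hmono x).1).not_ge hx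
    have hint : Iic y ∩ Ioo 0 1 = ∅ := eq_empty_of_forall_notMem fun u hu ↦
      (hy0.trans_lt hu.2.1).not_ge hu.1
    rw [hpre, hint, measure_empty, measure_empty]
  rcases lt_or_ge y 1 with hy1 | hy1
  · obtain ⟨x, rfl⟩ : y ∈ range (cdf μ) := range_cdf_eq_Ioo hcont hmono ▸ ⟨hy0, hy1⟩
    have hpre : cdf μ ⁻¹' Iic (cdf μ x) = Iic x := ext fun _ ↦ hmono.le_iff_le
    have hint : Iic (cdf μ x) ∩ Ioo 0 1 = Ioc 0 (cdf μ x) :=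
      ext fun u ↦ ⟨fun hu ↦ ⟨hu.2.1, hu.1⟩, fun hu ↦ ⟨hu.2, hu.1, hu.2.trans_lt hy1⟩⟩
    rw [hpre, hint, Real.volume_Ioc, sub_zero, ofReal_cdf]
  · have hpre : cdf μ ⁻¹' Iic y = univ := eq_univ_of_forall fun x ↦
      ((cdf_mem_Ioo_of_strictMono hmono x).2.le.trans hy1 : _)
    have hint : Iic y ∩ Ioo 0 1 = Ioo 0 1 := inter_eq_right.2 fun u hu ↦ hu.2.le.trans hy1
    rw [hpre, hint, measure_univ, Real.volume_Ioo, sub_zero, ENNReal.ofReal_one]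

theorem map_cdf_pi_withDensity_comp {ι : Type*} [Fintype ι] (μ : ι → Measure ℝ)
    [∀ i, IsProbabilityMeasure (μ i)] (hcont : ∀ i, Continuous (cdf (μ i)))
    (hmono : ∀ i, StrictMono (cdf (μ i))) {c : (ι → ℝ) → ℝ≥0∞} (hc : Measurable c) :
    ((Measure.pi μ).withDensity fun x ↦ c fun i ↦ cdf (μ i) (x i)).map
        (fun x i ↦ cdf (μ i) (x i)) =
      (volume.restrict (univ.pi fun _ ↦ Ioo 0 1)).withDensity c := by
  have hG : Measurable fun (x : ι → ℝ) i ↦ cdf (μ i) (x i) :=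
    measurable_pi_lambda _ fun i ↦ (hcont i).measurable.comp (measurable_pi_apply i)
  rw [Measure.map_withDensity_comp (g := c) hG hc,
    (measurePreserving_pi μ _ fun i ↦
      ⟨(hcont i).measurable, map_cdf_eq_volume_restrict_Ioo (hcont i) (hmono i)⟩).map_eq,
    volume_pi, Measure.restrict_pi_pi]

end ProbabilityTheory

theorem entropy_decomposition_general
    (n : ℕ)
    (p : Fin n → ℝ → ℝ) (hp_meas : ∀ i, Measurable (p i))
    (hp_nonneg : ∀ i x, 0 ≤ p i x) (hp_int : ∀ i, ∫ x, p i x = 1)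
    (F : Fin n → ℝ → ℝ) (hF : ∀ i x, F i x = ∫ t in Set.Iic x, p i t)
    (hF_cont : ∀ i, Continuous (F i)) (hF_mono : ∀ i, StrictMono (F i))
    (c : (Fin n → ℝ) → ℝ) (hc_meas : Measurable c) (hc_nonneg : ∀ u, 0 ≤ c u)
    (P : (Fin n → ℝ) → ℝ)
    (hP : ∀ x, P x = c (fun i => F i (x i)) * ∏ i, p i (x i))
    (hmarg : ∀ i, Measure.map (fun x => x i)
        (volume.withDensity fun x => ENNReal.ofReal (P x)) =
      volume.withDensity fun t => ENNReal.ofReal (p i t))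
    (hplogp : ∀ i, Integrable (fun t => p i t * Real.log (p i t)))
    (hclogc : IntegrableOn (fun u => c u * Real.log (c u))
      (Set.univ.pi fun _ : Fin n => Set.Icc (0 : ℝ) 1) volume) :
    -∫ x, P x * Real.log (P x) =
      (∑ i, -∫ t, p i t * Real.log (p i t)) +
        (-∫ u in Set.univ.pi fun _ : Fin n => Set.Icc (0 : ℝ) 1,
          c u * Real.log (c u)) := by
  set μ : Fin n → Measure ℝ := fun i ↦ volume.withDensity fun t ↦ ENNReal.ofReal (p i t)
  have hμ : ∀ i, IsProbabilityMeasure (μ i) := fun i ↦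
    isProbabilityMeasure_withDensity_ofReal (hp_nonneg i) (hp_int i)
  obtain rfl : F = fun i ↦ ⇑(cdf (μ i)) := funext fun i ↦ funext fun x ↦
    (hF i x).trans (cdf_withDensity_ofReal (hp_nonneg i) (hp_int i) x).symm
  have hG : Measurable fun (x : Fin n → ℝ) i ↦ cdf (μ i) (x i) :=
    measurable_pi_lambda _ fun i ↦ (hF_cont i).measurable.comp (measurable_pi_apply i)
  have hcopula : (volume.withDensity fun x ↦ ENNReal.ofReal (P x)).map
      (fun x i ↦ cdf (μ i) (x i)) =
      (volume.restrict (univ.pi fun _ ↦ Ioo 0 1)).withDensity fun u ↦ ENNReal.ofReal (c u) := by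
    simp only [hP]
    rw [volume_pi, Measure.pi_withDensity_ofReal_mul_prod hp_meas hp_nonneg
      (g := fun x ↦ c fun i ↦ cdf (μ i) (x i)) (hc_meas.comp hG),
      map_cdf_pi_withDensity_comp μ hF_cont hF_mono hc_meas.ennreal_ofReal, volume_pi]
  have hIoo : (univ.pi fun _ : Fin n ↦ Ioo (0 : ℝ) 1) =ᵐ[volume] univ.pi fun _ ↦ Icc 0 1 :=
    Measure.pi_Ioo_ae_eq_pi_Icc
  rw [integral_mul_log_eq_add_sum_of_map_withDensity hG (fun i ↦ measurable_pi_apply i) hc_meas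
    hc_nonneg hp_meas hp_nonneg hcopula hmarg hP
    (hclogc.mono_set (pi_mono fun _ _ ↦ Ioo_subset_Icc_self)) hplogp,
    setIntegral_congr_set hIoo, Finset.sum_neg_distrib]
  ring

/-- **Corollary 1: entropy decomposition.** If a joint density `P` on ℝⁿ factorizes as
`P x = c (F₁ x₁, …, Fₙ xₙ) · ∏ᵢ pᵢ xᵢ`, where the `pᵢ` are the one-dimensional marginal
densities of `P` with continuous, strictly increasing CDFs `Fᵢ`, and the relevant
`· log ·` integrands are integrable, then the joint differential entropy equals the sum of
the marginal differential entropies plus the copula entropy: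
`H(P) = Σᵢ H(pᵢ) + H_c`, where `H(q) = −∫ q log q` and `H_c = −∫_{[0,1]ⁿ} c log c`. -/
theorem entropy_decomposition
    (n : ℕ) (hn : 1 ≤ n)
    (p : Fin n → ℝ → ℝ) (hp_meas : ∀ i, Measurable (p i))
    (hp_nonneg : ∀ i x, 0 ≤ p i x) (hp_int : ∀ i, ∫ x, p i x = 1)
    (F : Fin n → ℝ → ℝ) (hF : ∀ i x, F i x = ∫ t in Set.Iic x, p i t)
    (hF_cont : ∀ i, Continuous (F i)) (hF_mono : ∀ i, StrictMono (F i))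
    (c : (Fin n → ℝ) → ℝ) (hc_meas : Measurable c) (hc_nonneg : ∀ u, 0 ≤ c u)
    (P : (Fin n → ℝ) → ℝ)
    (hP : ∀ x, P x = c (fun i => F i (x i)) * ∏ i, p i (x i))
    (hP_int : ∫ x, P x = 1)
    (hmarg : ∀ i, Measure.map (fun x => x i)
        (volume.withDensity fun x => ENNReal.ofReal (P x)) =
      volume.withDensity fun t => ENNReal.ofReal (p i t))
    (hPlogP : Integrable (fun x => P x * Real.log (P x)))
    (hplogp : ∀ i, Integrable (fun t => p i t * Real.log (p i t)))
    (hclogc : IntegrableOn (fun u => c u * Real.log (c u))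
      (Set.univ.pi fun _ : Fin n => Set.Icc (0 : ℝ) 1) volume) :
    -∫ x, P x * Real.log (P x) =
      (∑ i, -∫ t, p i t * Real.log (p i t)) +
        (-∫ u in Set.univ.pi fun _ : Fin n => Set.Icc (0 : ℝ) 1,
          c u * Real.log (c u)) :=
  entropy_decomposition_general n p hp_meas hp_nonneg hp_int F hF hF_cont hF_mono c hc_meas
    hc_nonneg P hP hmarg hplogp hclogc
end
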